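/- For θ = √2 - 1 = [2,2,2,...], the heavy set H_θ has Hausdorff dimension log 3 / log(3 + 2√2), and this value lies strictly between 0 and 1. -/

import Mathlib

/-!
The rotation by `θ = √2 - 1` renormalizes onto itself. With `ρ = 1 - 2θ = θ²`, the rotation induced
on `[0, ρ)` is, after scaling by `ρ⁻¹`, again the rotation by `θ` (return times 5 or 7), and along
the return block of `ρ * u` the Birkhoff sum of `f` gains `f u` without ever dropping below
`min 0 (f u)`. Hence `ρ * u` is heavy iff `u` is. A heavy point lies in `[0, 1/2]` and has the form
`ρ * (k + u)` with `k ∈ {0, 1, 2}`, and the `2k` steps leading from it to `u + k` have nonnegative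
partial sums and total `0`. So `H_θ` is the attractor `{∑ aₙ ρⁿ⁺¹ : aₙ ∈ {0, 1, 2}}`, whose three
pieces are separated because `3ρ < 1`. Its dimension is bounded above by covering it with `3ⁿ`
intervals of length `≍ ρⁿ`, and below because reading the same digits in base `3` is a Hölder map
of exponent `log 3 / log ρ⁻¹` onto `[0, 1]`.
-/

open Filter Set

/-- The function `f = χ_{[0,1/2]} - χ_{(1/2,1)}` on the circle, evaluated at `x mod 1`. -/
noncomputable def circf (x : ℝ) : ℝ := if Int.fract x ≤ 1/2 then 1 else -1

/-- Birkhoff sums `Sₙ(x) = Σ_{i=0}^{n-1} f(x + iθ)`. -/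
noncomputable def birk (θ : ℝ) (n : ℕ) (x : ℝ) : ℝ :=
  ∑ i ∈ Finset.range n, circf (x + i * θ)

/-- The heavy set `H_θ`. -/
noncomputable def heavy (θ : ℝ) : Set ℝ :=
  {x ∈ Set.Ico (0:ℝ) 1 | ∀ n : ℕ, 1 ≤ n → 0 ≤ birk θ n x}

/-- The strictly heavy set `H*_θ`. -/
noncomputable def sheavy (θ : ℝ) : Set ℝ :=
  {x ∈ Set.Ico (0:ℝ) 1 | ∀ n : ℕ, 1 ≤ n → 0 < birk θ n x}


open Topology

lemma Int.fract_fract_add (a b : ℝ) : Int.fract (Int.fract a + b) = Int.fract (a + b) :=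
  Int.fract_eq_fract.2 ⟨-⌊a⌋, by rw [Int.fract]; push_cast; ring⟩

lemma Nat.exists_le_and_lt_succ {N : ℕ → ℕ} (h0 : N 0 = 0) {n : ℕ} (hn : ∃ m, n < N m) :
    ∃ m, N m ≤ n ∧ n < N (m + 1) := by
  have hex : ∃ m, n < N (m + 1) := by
    obtain ⟨m, hm⟩ := hn
    obtain ⟨k, rfl⟩ := Nat.exists_eq_succ_of_ne_zero (by rintro rfl; omega : m ≠ 0)
    exact ⟨k, hm⟩
  refine ⟨Nat.find hex, ?_, Nat.find_spec hex⟩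
  rcases h : Nat.find hex with _ | k
  · omega
  · exact not_lt.1 (Nat.find_min hex (by omega : k < Nat.find hex))

section Birkhoff

lemma circf_add_intCast (x : ℝ) (m : ℤ) : circf (x + m) = circf x := by
  simp only [circf, Int.fract_add_intCast]

lemma circf_fract (x : ℝ) : circf (Int.fract x) = circf x := by
  simp only [circf, Int.fract_fract]

lemma circf_eq_one {x : ℝ} (m : ℤ) (h₁ : m ≤ x) (h₂ : x ≤ m + 1 / 2) : circf x = 1 := by
  have : Int.fract x = x - m := by
    rw [Int.fract, Int.floor_eq_iff.2 ⟨h₁, by linarith⟩]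
  rw [circf, if_pos (by linarith)]

lemma circf_eq_neg_one {x : ℝ} (m : ℤ) (h₁ : m + 1 / 2 < x) (h₂ : x < m + 1) :
    circf x = -1 := by
  have : Int.fract x = x - m := by
    rw [Int.fract, Int.floor_eq_iff.2 ⟨by linarith, h₂⟩]
  rw [circf, if_neg (by linarith)]

variable (θ : ℝ)

@[simp] lemma birk_zero (x : ℝ) : birk θ 0 x = 0 := by simp [birk]

lemma birk_succ (n : ℕ) (x : ℝ) : birk θ (n + 1) x = birk θ n x + circf (x + n * θ) :=
  Finset.sum_range_succ _ _

lemma birk_one (x : ℝ) : birk θ 1 x = circf x := by simp [birk]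

lemma birk_add (m n : ℕ) (x : ℝ) : birk θ (m + n) x = birk θ m x + birk θ n (x + m * θ) := by
  rw [birk, birk, birk, Finset.sum_range_add]
  congr 1
  exact Finset.sum_congr rfl fun i _ => by push_cast; ring_nf

lemma birk_add_intCast (n : ℕ) (x : ℝ) (p : ℤ) : birk θ n (x + p) = birk θ n x :=
  Finset.sum_congr rfl fun i _ => by rw [add_right_comm, circf_add_intCast]

end Birkhoff

section DigitExpansion

variable {b : ℕ} {q : ℝ}

noncomputable def digitSum (q : ℝ) (a : ℕ → Fin b) : ℝ := ∑' n, ((a n : ℕ) : ℝ) * q ^ (n + 1)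

lemma Fin.natCast_val_le_sub_one (k : Fin b) : ((k : ℕ) : ℝ) ≤ b - 1 := by
  have : ((k : ℕ) : ℝ) + 1 ≤ b := by exact_mod_cast k.isLt
  linarith

lemma hasSum_sub_one_mul_pow_succ (hq0 : 0 ≤ q) (hq1 : q < 1) :
    HasSum (fun n : ℕ => ((b : ℝ) - 1) * q ^ (n + 1)) ((b - 1) * q / (1 - q)) := by
  rw [div_eq_mul_inv]
  exact ((hasSum_geometric_of_lt_one hq0 hq1).mul_left ((b - 1) * q)).congr_fun fun n => by ring

lemma summable_digitSum (hq0 : 0 ≤ q) (hq1 : q < 1) (a : ℕ → Fin b) :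
    Summable fun n => ((a n : ℕ) : ℝ) * q ^ (n + 1) :=
  (hasSum_sub_one_mul_pow_succ hq0 hq1).summable.of_nonneg_of_le (fun n => by positivity)
    fun n => by gcongr; exact (a n).natCast_val_le_sub_one

lemma digitSum_nonneg (hq0 : 0 ≤ q) (a : ℕ → Fin b) : 0 ≤ digitSum q a :=
  tsum_nonneg fun n => by positivity

lemma digitSum_le (hq0 : 0 ≤ q) (hq1 : q < 1) (a : ℕ → Fin b) :
    digitSum q a ≤ (b - 1) * q / (1 - q) :=
  hasSum_le (fun n => by gcongr; exact (a n).natCast_val_le_sub_one)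
    (summable_digitSum hq0 hq1 a).hasSum (hasSum_sub_one_mul_pow_succ hq0 hq1)

lemma digitSum_eq_sum_add (hq0 : 0 ≤ q) (hq1 : q < 1) (a : ℕ → Fin b) (n : ℕ) :
    digitSum q a = ∑ i ∈ Finset.range n, ((a i : ℕ) : ℝ) * q ^ (i + 1) +
      q ^ n * digitSum q (fun i => a (i + n)) := by
  rw [digitSum, ← (summable_digitSum hq0 hq1 a).sum_add_tsum_nat_add n, digitSum,
    ← tsum_mul_left]
  congr 1
  exact tsum_congr fun i => by ring

lemma digitSum_eq_add (hq0 : 0 ≤ q) (hq1 : q < 1) (a : ℕ → Fin b) :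
    digitSum q a = q * (a 0 + digitSum q (fun i => a (i + 1))) := by
  rw [digitSum_eq_sum_add hq0 hq1 a 1]
  simp only [Finset.sum_range_one]
  ring

theorem subset_range_digitSum (hq0 : 0 ≤ q) (hq1 : q < 1) {H : Set ℝ}
    (hH : Bornology.IsBounded H) (hstep : ∀ z ∈ H, ∃ k : Fin b, ∃ u ∈ H, z = q * (k + u)) :
    H ⊆ range (digitSum q : (ℕ → Fin b) → ℝ) := by
  choose digit next hnext hz using hstep
  intro z hzH
  let w : ℕ → H := fun n => (fun v : H => (⟨next v v.2, hnext v v.2⟩ : H))^[n] ⟨z, hzH⟩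
  let a : ℕ → Fin b := fun n => digit (w n) (w n).2
  have hw : ∀ n, (w n : ℝ) = q * (a n + w (n + 1)) := fun n => by
    rw [show w (n + 1) = ⟨next (w n) (w n).2, hnext _ _⟩ from Function.iterate_succ_apply' _ _ _]
    exact hz _ _
  have hpartial : ∀ n, ∑ i ∈ Finset.range n, ((a i : ℕ) : ℝ) * q ^ (i + 1) = z - q ^ n * w n := by
    intro n
    induction n with
    | zero => simp [w]
    | succ n ih =>
      rw [Finset.sum_range_succ, ih]
      linear_combination (-q ^ n) * hw n
  obtain ⟨C, hC⟩ := hH.exists_norm_le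
  have htail : Tendsto (fun n => q ^ n * (w n : ℝ)) atTop (𝓝 0) := by
    refine squeeze_zero_norm (fun n => ?_)
      (by simpa using (tendsto_pow_atTop_nhds_zero_of_lt_one hq0 hq1).mul_const C)
    rw [norm_mul, norm_pow, Real.norm_of_nonneg hq0]
    exact mul_le_mul_of_nonneg_left (hC _ (w n).2) (by positivity)
  refine ⟨a, tendsto_nhds_unique (summable_digitSum hq0 hq1 a).hasSum.tendsto_sum_nat ?_⟩
  simpa [hpartial] using htail.const_sub z

lemma digitSum_sub_digitSum (hq0 : 0 ≤ q) (hq1 : q < 1) {a a' : ℕ → Fin b} {n : ℕ}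
    (h : ∀ i < n, a i = a' i) :
    digitSum q a - digitSum q a' =
      q ^ n * (digitSum q (fun i => a (i + n)) - digitSum q (fun i => a' (i + n))) := by
  rw [digitSum_eq_sum_add hq0 hq1 a n, digitSum_eq_sum_add hq0 hq1 a' n,
    Finset.sum_congr rfl fun i hi => by rw [h i (Finset.mem_range.1 hi)]]
  ring

lemma le_abs_digitSum_sub (hq0 : 0 ≤ q) (hq1 : q < 1) {a a' : ℕ → Fin b} {n : ℕ}
    (h : ∀ i < n, a i = a' i) (hn : a n ≠ a' n) :
    q ^ n * (q * (1 - b * q) / (1 - q)) ≤ |digitSum q a - digitSum q a'| := by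
  rw [digitSum_sub_digitSum hq0 hq1 h, abs_mul, abs_of_nonneg (by positivity)]
  gcongr
  set c := fun i => a (i + n)
  set c' := fun i => a' (i + n)
  have hdigit : (1 : ℝ) ≤ |((c 0 : ℕ) : ℝ) - (c' 0 : ℕ)| := by
    have : ((c 0 : ℕ) : ℤ) ≠ (c' 0 : ℕ) := by simpa [c, c', Fin.val_inj] using hn
    exact_mod_cast Int.one_le_abs (sub_ne_zero.2 this)
  have htail : |digitSum q (fun i => c (i + 1)) - digitSum q (fun i => c' (i + 1))| ≤
      (b - 1) * q / (1 - q) :=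
    abs_sub_le_of_nonneg_of_le (digitSum_nonneg hq0 _) (digitSum_le hq0 hq1 _)
      (digitSum_nonneg hq0 _) (digitSum_le hq0 hq1 _)
  have hsplit : digitSum q c - digitSum q c' = q * (((c 0 : ℕ) : ℝ) - (c' 0 : ℕ)) +
      q * (digitSum q (fun i => c (i + 1)) - digitSum q (fun i => c' (i + 1))) := by
    rw [digitSum_eq_add hq0 hq1 c, digitSum_eq_add hq0 hq1 c']
    ring
  have hq1' : 0 < 1 - q := by linarith
  calc q * (1 - b * q) / (1 - q) = q * 1 - q * ((b - 1) * q / (1 - q)) := by field_simp; ring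
    _ ≤ q * |((c 0 : ℕ) : ℝ) - (c' 0 : ℕ)| -
        q * |digitSum q (fun i => c (i + 1)) - digitSum q (fun i => c' (i + 1))| := by
      gcongr
    _ ≤ |digitSum q c - digitSum q c'| := by
      have := abs_sub_abs_le_abs_add (q * (((c 0 : ℕ) : ℝ) - (c' 0 : ℕ)))
        (q * (digitSum q (fun i => c (i + 1)) - digitSum q (fun i => c' (i + 1))))
      rwa [abs_mul, abs_mul, abs_of_nonneg hq0, ← hsplit] at this

end DigitExpansion

section SimilarityDimension

open scoped ENNReal NNReal

variable {b : ℕ} {q : ℝ}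

noncomputable def similarityDim (b : ℕ) (q : ℝ) : ℝ := Real.log b / Real.log q⁻¹

lemma log_inv_pos (hq0 : 0 < q) (hq1 : q < 1) : 0 < Real.log q⁻¹ :=
  Real.log_pos ((one_lt_inv₀ hq0).2 hq1)

lemma similarityDim_nonneg (hq0 : 0 < q) (hq1 : q < 1) : 0 ≤ similarityDim b q :=
  div_nonneg (Real.log_natCast_nonneg b) (log_inv_pos hq0 hq1).le

lemma similarityDim_pos (hb : 2 ≤ b) (hq0 : 0 < q) (hq1 : q < 1) : 0 < similarityDim b q :=
  div_pos (Real.log_pos (by exact_mod_cast hb)) (log_inv_pos hq0 hq1)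

lemma rpow_similarityDim (hb : b ≠ 0) (hq0 : 0 < q) (hq1 : q < 1) :
    q ^ similarityDim b q = (b : ℝ)⁻¹ := by
  have hlog : Real.log q ≠ 0 := (Real.log_neg hq0 hq1).ne
  rw [Real.rpow_def_of_pos hq0, similarityDim, Real.log_inv,
    show Real.log q * (Real.log b / -Real.log q) = -Real.log b by field_simp,
    Real.exp_neg, Real.exp_log (by positivity)]

lemma pow_rpow_similarityDim (hb : b ≠ 0) (hq0 : 0 < q) (hq1 : q < 1) (n : ℕ) :
    (q ^ n) ^ similarityDim b q = ((b : ℝ) ^ n)⁻¹ := by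
  rw [← Real.rpow_natCast, ← Real.rpow_mul hq0.le, mul_comm, Real.rpow_mul hq0.le,
    rpow_similarityDim hb hq0 hq1, Real.rpow_natCast, inv_pow]

theorem dimH_le_similarityDim_of_cover {X : Type*} [EMetricSpace X] {s : Set X} (hb : b ≠ 0)
    (hq0 : 0 < q) (hq1 : q < 1) {c : ℝ} (hc : 0 ≤ c) (t : (n : ℕ) → (Fin n → Fin b) → Set X)
    (ht : ∀ n w, Metric.ediam (t n w) ≤ ENNReal.ofReal (q ^ n * c))
    (hs : ∀ n, s ⊆ ⋃ w, t n w) :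
    dimH s ≤ ENNReal.ofReal (similarityDim b q) := by
  borelize X
  set d := similarityDim b q
  have hd : 0 ≤ d := similarityDim_nonneg hq0 hq1
  have hsum : ∀ n, ∑ w, Metric.ediam (t n w) ^ d ≤ ENNReal.ofReal (c ^ d) := by
    intro n
    calc ∑ w, Metric.ediam (t n w) ^ d ≤ ∑ _w : Fin n → Fin b, ENNReal.ofReal (q ^ n * c) ^ d :=
          Finset.sum_le_sum fun w _ => ENNReal.rpow_le_rpow (ht n w) hd
      _ = ENNReal.ofReal (c ^ d) := by
          rw [Finset.sum_const, Finset.card_univ, Fintype.card_fun, Fintype.card_fin,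
            Fintype.card_fin, nsmul_eq_mul, ENNReal.ofReal_rpow_of_nonneg (by positivity) hd,
            Real.mul_rpow (by positivity) hc, pow_rpow_similarityDim hb hq0 hq1,
            ← ENNReal.ofReal_natCast, ← ENNReal.ofReal_mul (by positivity)]
          congr 1
          push_cast
          field_simp
  have hdiam : Tendsto (fun n : ℕ => ENNReal.ofReal (q ^ n * c)) atTop (𝓝 0) := by
    simpa using ENNReal.tendsto_ofReal
      ((tendsto_pow_atTop_nhds_zero_of_lt_one hq0.le hq1).mul_const c)
  have hμ := (MeasureTheory.Measure.hausdorffMeasure_le_liminf_sum d s _ hdiam t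
    (Eventually.of_forall ht) (Eventually.of_forall hs)).trans
    ((liminf_le_liminf (Eventually.of_forall hsum)).trans_eq (liminf_const _))
  rw [ENNReal.ofReal_eq_coe_nnreal hd]
  exact dimH_le_of_hausdorffMeasure_ne_top (ne_top_of_le_ne_top ENNReal.ofReal_ne_top hμ)

theorem dimH_range_digitSum_le (hb : b ≠ 0) (hq0 : 0 < q) (hq1 : q < 1) :
    dimH (range (digitSum q : (ℕ → Fin b) → ℝ)) ≤ ENNReal.ofReal (similarityDim b q) := by
  have hD : 0 ≤ (b - 1) * q / (1 - q) := by
    have : (1 : ℝ) ≤ b := by exact_mod_cast Nat.one_le_iff_ne_zero.2 hb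
    have : 0 < 1 - q := by linarith
    positivity
  let s (n : ℕ) (w : Fin n → Fin b) : ℝ := ∑ i : Fin n, ((w i : ℕ) : ℝ) * q ^ ((i : ℕ) + 1)
  refine dimH_le_similarityDim_of_cover hb hq0 hq1 hD
    (fun n w => Icc (s n w) (s n w + q ^ n * ((b - 1) * q / (1 - q))))
    (fun n w => by rw [Real.ediam_Icc, add_sub_cancel_left]) ?_
  rintro n _ ⟨a, rfl⟩
  refine mem_iUnion.2 ⟨fun i => a i, ?_⟩
  rw [digitSum_eq_sum_add hq0.le hq1 a n, ← Fin.sum_univ_eq_sum_range]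
  have := digitSum_nonneg hq0.le (fun i => a (i + n))
  have := digitSum_le hq0.le hq1 (fun i => a (i + n))
  exact ⟨le_add_of_nonneg_right (by positivity), by gcongr⟩

/-- `g` factors through `f` by a Hölder map of exponent `r`. -/
theorem dimH_range_le_of_edist_le {α X Y : Type*} [EMetricSpace X] [EMetricSpace Y]
    {f : α → X} {g : α → Y} {C r : ℝ≥0} (hr : 0 < r)
    (h : ∀ a a', edist (g a) (g a') ≤ C * edist (f a) (f a') ^ (r : ℝ)) :
    dimH (range g) ≤ dimH (range f) / r := by
  rcases isEmpty_or_nonempty α with hα | hα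
  · simp [range_eq_empty]
  have hgf : ∀ a, g (Function.invFun f (f a)) = g a := by
    intro a
    have := h (Function.invFun f (f a)) a
    rwa [Function.invFun_eq (f := f) ⟨a, rfl⟩, edist_self,
      ENNReal.zero_rpow_of_pos (by exact_mod_cast hr), mul_zero, nonpos_iff_eq_zero,
      edist_eq_zero] at this
  have hrange : range g = (g ∘ Function.invFun f) '' range f := by
    rw [← range_comp]
    exact congrArg range (funext fun a => (hgf a).symm)
  have hHolder : HolderOnWith C r (g ∘ Function.invFun f) (range f) := by
    rintro _ ⟨a, rfl⟩ _ ⟨a', rfl⟩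
    simpa only [Function.comp_apply, hgf] using h a a'
  exact hrange ▸ hHolder.dimH_image_le hr

lemma abs_ofDigits_sub_le (hq0 : 0 < q) (hbq : b * q < 1) (a a' : ℕ → Fin b) :
    |Real.ofDigits a - Real.ofDigits a'| ≤ (q * (1 - b * q) / (1 - q)) ^ (-similarityDim b q) *
      |digitSum q a - digitSum q a'| ^ similarityDim b q := by
  have hb : (1 : ℝ) ≤ b := by exact_mod_cast Fin.pos (a 0)
  have hq1 : q < 1 := by nlinarith
  have hc : 0 < q * (1 - b * q) / (1 - q) := div_pos (mul_pos hq0 (by linarith)) (by linarith)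
  set d := similarityDim b q
  by_cases heq : a = a'
  · subst heq
    simp only [sub_self, abs_zero]
    positivity
  have hex : ∃ n, a n ≠ a' n := Function.ne_iff.1 heq
  have hagree : ∀ i < Nat.find hex, a i = a' i := fun i hi => not_not.1 (Nat.find_min hex hi)
  have hsep := le_abs_digitSum_sub hq0.le hq1 hagree (Nat.find_spec hex)
  calc |Real.ofDigits a - Real.ofDigits a'| ≤ ((b : ℝ) ^ Nat.find hex)⁻¹ :=
        Real.abs_ofDigits_sub_ofDigits_le hagree
    _ = (q ^ Nat.find hex) ^ d :=
        (pow_rpow_similarityDim (Fin.pos (a 0)).ne' hq0 hq1 _).symm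
    _ ≤ (|digitSum q a - digitSum q a'| / (q * (1 - b * q) / (1 - q))) ^ d := by
        gcongr
        · exact similarityDim_nonneg hq0 hq1
        · rwa [le_div_iff₀ hc]
    _ = _ := by
        rw [Real.div_rpow (abs_nonneg _) hc.le, Real.rpow_neg hc.le, div_eq_inv_mul]

theorem le_dimH_range_digitSum (hb : 2 ≤ b) (hq0 : 0 < q) (hbq : b * q < 1) :
    ENNReal.ofReal (similarityDim b q) ≤ dimH (range (digitSum q : (ℕ → Fin b) → ℝ)) := by
  have hq1 : q < 1 := by
    have : (2 : ℝ) ≤ b := by exact_mod_cast hb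
    nlinarith
  have hd := similarityDim_pos hb hq0 hq1
  set d : ℝ≥0 := ⟨similarityDim b q, hd.le⟩
  set C : ℝ := (q * (1 - b * q) / (1 - q)) ^ (-similarityDim b q)
  have hHolder : ∀ a a' : ℕ → Fin b, edist (Real.ofDigits a) (Real.ofDigits a') ≤
      C.toNNReal * edist (digitSum q a) (digitSum q a') ^ (d : ℝ) := by
    intro a a'
    rw [edist_dist, edist_dist, Real.dist_eq, Real.dist_eq]
    change _ ≤ ENNReal.ofReal C * ENNReal.ofReal |_| ^ similarityDim b q
    rw [ENNReal.ofReal_rpow_of_nonneg (abs_nonneg _) hd.le, ← ENNReal.ofReal_mul (by positivity)]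
    exact ENNReal.ofReal_le_ofReal (abs_ofDigits_sub_le hq0 hbq a a')
  have h1 : (1 : ℝ≥0∞) ≤ dimH (range (digitSum q : (ℕ → Fin b) → ℝ)) / d := calc
    1 = dimH (Icc (0 : ℝ) 1) := by
      rw [Real.dimH_of_nonempty_interior (by simp), Module.finrank_self, Nat.cast_one]
    _ ≤ dimH (range (Real.ofDigits : (ℕ → Fin b) → ℝ)) :=
      dimH_mono (Real.ofDigits_SurjOn hb).subset_range
    _ ≤ _ := dimH_range_le_of_edist_le (by exact_mod_cast hd) hHolder
  rw [ENNReal.ofReal_eq_coe_nnreal hd.le]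
  have := (ENNReal.le_div_iff_mul_le (Or.inl (ENNReal.coe_pos.2 (show (0 : ℝ≥0) < d from hd)).ne')
    (Or.inl ENNReal.coe_ne_top)).1 h1
  rwa [one_mul] at this

theorem dimH_range_digitSum (hb : 2 ≤ b) (hq0 : 0 < q) (hbq : b * q < 1) :
    dimH (range (digitSum q : (ℕ → Fin b) → ℝ)) = ENNReal.ofReal (similarityDim b q) := by
  have hq1 : q < 1 := by
    have : (2 : ℝ) ≤ b := by exact_mod_cast hb
    nlinarith
  exact le_antisymm (dimH_range_digitSum_le (by omega) hq0 hq1) (le_dimH_range_digitSum hb hq0 hbq)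

end SimilarityDimension

namespace SilverRotation

noncomputable def θ : ℝ := √2 - 1

noncomputable def ρ : ℝ := 1 - 2 * θ

lemma ρ_mul_θ : ρ * θ = θ - 2 * ρ := by
  have := Real.sq_sqrt (show (0 : ℝ) ≤ 2 by norm_num)
  rw [ρ, θ]
  linear_combination (-2 : ℝ) * this

lemma θ_bounds : 0.41421 < θ ∧ θ < 0.41422 := by
  have := Real.sq_sqrt (show (0 : ℝ) ≤ 2 by norm_num)
  have := Real.sqrt_nonneg 2
  constructor <;> rw [θ] <;> nlinarith

lemma ρ_bounds : 0.17156 < ρ ∧ ρ < 0.17158 := by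
  obtain ⟨h₁, h₂⟩ := θ_bounds
  constructor <;> rw [ρ] <;> linarith

lemma inv_ρ : ρ⁻¹ = 3 + 2 * √2 := by
  have := Real.sq_sqrt (show (0 : ℝ) ≤ 2 by norm_num)
  rw [inv_eq_iff_eq_inv]
  refine eq_inv_of_mul_eq_one_left ?_
  rw [ρ, θ]
  linear_combination (-4 : ℝ) * this

lemma digitSum_le_θ (a : ℕ → Fin 3) : digitSum ρ a ≤ θ := by
  obtain ⟨h₁, h₂⟩ := ρ_bounds
  refine (digitSum_le (by linarith) (by linarith) a).trans_eq ?_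
  rw [div_eq_iff (by linarith)]
  push_cast
  linear_combination ρ_mul_θ

/-- The first return time of `ρ * u` to `[0, ρ)` under the rotation by `θ`. -/
noncomputable def blockLength (u : ℝ) : ℕ := if u < 1 - θ then 5 else 7

lemma birk_block_of_le_half {u : ℝ} (hu₀ : 0 ≤ u) (hu : u ≤ 1 / 2) :
    birk θ 5 (ρ * u) = 1 ∧ ∀ j ≤ 5, 0 ≤ birk θ j (ρ * u) := by
  obtain ⟨h₁, h₂⟩ := θ_bounds
  have hx₀ : 0 ≤ ρ * u := mul_nonneg (by linarith [ρ_bounds.1]) hu₀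
  have hx₁ : ρ * u ≤ ρ / 2 := by nlinarith [ρ_bounds.1]
  have hρ : ρ = 1 - 2 * θ := rfl
  have c₀ := circf_eq_one 0 (x := ρ * u)
    (by push_cast; linarith) (by push_cast; linarith)
  have c₁ := circf_eq_one 0 (x := ρ * u + θ)
    (by push_cast; linarith) (by push_cast; linarith)
  have c₂ := circf_eq_neg_one 0 (x := ρ * u + 2 * θ)
    (by push_cast; linarith) (by push_cast; linarith)
  have c₃ := circf_eq_one 1 (x := ρ * u + 3 * θ)
    (by push_cast; linarith) (by push_cast; linarith)
  have c₄ := circf_eq_neg_one 1 (x := ρ * u + 4 * θ)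
    (by push_cast; linarith) (by push_cast; linarith)
  refine ⟨?_, fun j hj => ?_⟩
  · simp [birk, Finset.sum_range_succ, c₀, c₁, c₂, c₃, c₄]
  · interval_cases j <;> simp [birk, Finset.sum_range_succ, c₀, c₁, c₂, c₃, c₄]

lemma birk_block_of_half_lt {u : ℝ} (hu : 1 / 2 < u) (hu₁ : u < 1 - θ) :
    birk θ 5 (ρ * u) = -1 ∧ ∀ j ≤ 5, -1 ≤ birk θ j (ρ * u) := by
  obtain ⟨h₁, h₂⟩ := θ_bounds
  have hx₀ : ρ / 2 < ρ * u := by nlinarith [ρ_bounds.1]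
  have hx₁ : ρ * u < ρ * (1 - θ) := by nlinarith [ρ_bounds.1]
  have hρ : ρ = 1 - 2 * θ := rfl
  have hρθ := ρ_mul_θ
  have c₀ := circf_eq_one 0 (x := ρ * u)
    (by push_cast; linarith) (by push_cast; linarith)
  have c₁ := circf_eq_neg_one 0 (x := ρ * u + θ)
    (by push_cast; linarith) (by push_cast; linarith)
  have c₂ := circf_eq_neg_one 0 (x := ρ * u + 2 * θ)
    (by push_cast; linarith) (by push_cast; linarith)
  have c₃ := circf_eq_one 1 (x := ρ * u + 3 * θ)
    (by push_cast; linarith) (by push_cast; linarith)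
  have c₄ := circf_eq_neg_one 1 (x := ρ * u + 4 * θ)
    (by push_cast; linarith) (by push_cast; linarith)
  refine ⟨?_, fun j hj => ?_⟩
  · simp [birk, Finset.sum_range_succ, c₀, c₁, c₂, c₃, c₄]
  · interval_cases j <;> simp [birk, Finset.sum_range_succ, c₀, c₁, c₂, c₃, c₄]

lemma birk_block_of_one_sub_θ_le {u : ℝ} (hu : 1 - θ ≤ u) (hu₁ : u < 1) :
    birk θ 7 (ρ * u) = -1 ∧ ∀ j ≤ 7, -1 ≤ birk θ j (ρ * u) := by
  obtain ⟨h₁, h₂⟩ := θ_bounds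
  have hx₀ : ρ * (1 - θ) ≤ ρ * u := by nlinarith [ρ_bounds.1]
  have hx₁ : ρ * u < ρ := by nlinarith [ρ_bounds.1]
  have hρ : ρ = 1 - 2 * θ := rfl
  have hρθ := ρ_mul_θ
  have c₀ := circf_eq_one 0 (x := ρ * u)
    (by push_cast; linarith) (by push_cast; linarith)
  have c₁ := circf_eq_neg_one 0 (x := ρ * u + θ)
    (by push_cast; linarith) (by push_cast; linarith)
  have c₂ := circf_eq_neg_one 0 (x := ρ * u + 2 * θ)
    (by push_cast; linarith) (by push_cast; linarith)
  have c₃ := circf_eq_one 1 (x := ρ * u + 3 * θ)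
    (by push_cast; linarith) (by push_cast; linarith)
  have c₄ := circf_eq_neg_one 1 (x := ρ * u + 4 * θ)
    (by push_cast; linarith) (by push_cast; linarith)
  have c₅ := circf_eq_one 2 (x := ρ * u + 5 * θ)
    (by push_cast; linarith) (by push_cast; linarith)
  have c₆ := circf_eq_neg_one 2 (x := ρ * u + 6 * θ)
    (by push_cast; linarith) (by push_cast; linarith)
  refine ⟨?_, fun j hj => ?_⟩
  · simp [birk, Finset.sum_range_succ, c₀, c₁, c₂, c₃, c₄, c₅, c₆]
  · interval_cases j <;> simp [birk, Finset.sum_range_succ, c₀, c₁, c₂, c₃, c₄, c₅, c₆]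

lemma circf_of_mem_Ico {u : ℝ} (hu₀ : 0 ≤ u) (hu₁ : u < 1) :
    circf u = if u ≤ 1 / 2 then 1 else -1 := by
  split_ifs with h
  · exact circf_eq_one 0 (by simpa using hu₀) (by simpa using h)
  · exact circf_eq_neg_one 0 (by push_cast; linarith) (by simpa using hu₁)

lemma birk_block {u : ℝ} (hu₀ : 0 ≤ u) (hu₁ : u < 1) :
    birk θ (blockLength u) (ρ * u) = circf u ∧
      (∀ j ≤ blockLength u, min 0 (circf u) ≤ birk θ j (ρ * u)) ∧
      ∃ p : ℤ, ρ * u + blockLength u * θ = ρ * Int.fract (u + θ) + p := by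
  obtain ⟨h₁, h₂⟩ := θ_bounds
  have hρ : ρ = 1 - 2 * θ := rfl
  have hρθ := ρ_mul_θ
  rw [circf_of_mem_Ico hu₀ hu₁]
  rcases lt_or_ge u (1 - θ) with hB | hB
  · have hfract : Int.fract (u + θ) = u + θ := Int.fract_eq_self.2 ⟨by linarith, by linarith⟩
    rw [blockLength, if_pos hB, hfract]
    rcases le_or_gt u (1 / 2) with hA | hA
    · obtain ⟨hsum, hpartial⟩ := birk_block_of_le_half hu₀ hA
      rw [if_pos hA]
      exact ⟨hsum, fun j hj => (min_le_left _ _).trans (hpartial j hj), 2, by push_cast; linarith⟩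
    · obtain ⟨hsum, hpartial⟩ := birk_block_of_half_lt hA hB
      rw [if_neg hA.not_ge]
      exact ⟨hsum, fun j hj => (min_le_right _ _).trans (hpartial j hj), 2, by push_cast; linarith⟩
  · have hfract : Int.fract (u + θ) = u + θ - 1 := by
      rw [Int.fract_eq_iff]
      exact ⟨by linarith, by linarith, 1, by push_cast; ring⟩
    rw [blockLength, if_neg hB.not_gt, hfract, if_neg (by linarith)]
    obtain ⟨hsum, hpartial⟩ := birk_block_of_one_sub_θ_le hB hu₁
    exact ⟨hsum, fun j hj => (min_le_right _ _).trans (hpartial j hj), 3, by push_cast; linarith⟩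

noncomputable def blocksLength (m : ℕ) (u : ℝ) : ℕ :=
  ∑ i ∈ Finset.range m, blockLength (Int.fract (u + i * θ))

lemma blocksLength_succ (m : ℕ) (u : ℝ) :
    blocksLength (m + 1) u = blocksLength m u + blockLength (Int.fract (u + m * θ)) :=
  Finset.sum_range_succ _ _

lemma five_mul_le_blocksLength (m : ℕ) (u : ℝ) : 5 * m ≤ blocksLength m u := by
  have := Finset.card_nsmul_le_sum (Finset.range m) (fun i => blockLength (Int.fract (u + i * θ))) 5
    fun i _ => by unfold blockLength; split <;> norm_num
  rwa [Finset.card_range, smul_eq_mul, mul_comm] at this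

lemma birk_blocksLength {u : ℝ} (hu₀ : 0 ≤ u) (hu₁ : u < 1) (m : ℕ) :
    birk θ (blocksLength m u) (ρ * u) = birk θ m u ∧
      ∃ p : ℤ, ρ * u + blocksLength m u * θ = ρ * Int.fract (u + m * θ) + p := by
  induction m with
  | zero =>
    exact ⟨by simp [blocksLength], 0, by simp [blocksLength, Int.fract_eq_self.2 ⟨hu₀, hu₁⟩]⟩
  | succ m ih =>
    obtain ⟨hbirk, p, hp⟩ := ih
    obtain ⟨hsum, -, p', hp'⟩ := birk_block (Int.fract_nonneg (u + m * θ)) (Int.fract_lt_one _)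
    rw [Int.fract_fract_add, add_assoc, ← add_one_mul] at hp'
    refine ⟨?_, p' + p, ?_⟩
    · rw [blocksLength_succ, birk_add, hbirk, hp, birk_add_intCast, hsum, circf_fract, birk_succ]
    · rw [blocksLength_succ]
      push_cast
      linear_combination hp + hp'

lemma exists_min_le_birk_ρ_mul {u : ℝ} (hu₀ : 0 ≤ u) (hu₁ : u < 1) (n : ℕ) :
    ∃ m, 5 * m ≤ n ∧ min (birk θ m u) (birk θ (m + 1) u) ≤ birk θ n (ρ * u) := by
  obtain ⟨m, hle, hlt⟩ := Nat.exists_le_and_lt_succ (N := (blocksLength · u)) (n := n)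
    (by simp [blocksLength]) ⟨n + 1, by linarith [five_mul_le_blocksLength (n + 1) u]⟩
  obtain ⟨hbirk, p, hp⟩ := birk_blocksLength hu₀ hu₁ m
  obtain ⟨-, hpartial, -⟩ := birk_block (Int.fract_nonneg (u + m * θ)) (Int.fract_lt_one _)
  rw [blocksLength_succ] at hlt
  obtain ⟨j, rfl⟩ := Nat.exists_eq_add_of_le hle
  refine ⟨m, (five_mul_le_blocksLength m u).trans hle, ?_⟩
  have hstep := hpartial j (by omega)
  rw [circf_fract] at hstep
  rw [birk_add θ (blocksLength m u), hbirk, hp, birk_add_intCast, birk_succ]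
  calc min (birk θ m u) (birk θ m u + circf (u + m * θ))
      = birk θ m u + min 0 (circf (u + m * θ)) := by rw [← min_add_add_left, add_zero]
    _ ≤ _ := by gcongr

lemma birk_ρ_mul_nonneg {u : ℝ} (hu₀ : 0 ≤ u) (hu : u ≤ 1 / 2) {n : ℕ}
    (h : ∀ m < n, 0 ≤ birk θ m u) : 0 ≤ birk θ n (ρ * u) := by
  obtain ⟨m, hmn, hmin⟩ := exists_min_le_birk_ρ_mul hu₀ (by linarith) n
  refine le_trans ?_ hmin
  rcases Nat.eq_zero_or_pos m with rfl | hm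
  · simp [birk_one, circf_eq_one 0 (by simpa using hu₀) (by simpa using hu)]
  · exact le_min (h m (by omega)) (h (m + 1) (by omega))

lemma mem_heavy_of_ρ_mul_mem {u : ℝ} (hu₀ : 0 ≤ u) (hu₁ : u < 1) (h : ρ * u ∈ heavy θ) :
    u ∈ heavy θ := by
  refine ⟨⟨hu₀, hu₁⟩, fun m hm => ?_⟩
  rw [← (birk_blocksLength hu₀ hu₁ m).1]
  exact h.2 _ (by linarith [five_mul_le_blocksLength m u])

lemma birk_add_digit {k : ℕ} (hk : k < 3) {y : ℝ} (hy₀ : 0 ≤ y) (hyρ : y < ρ)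
    (hz : y + k * ρ ≤ 1 / 2) :
    (∀ j ≤ 2 * k, 0 ≤ birk θ j (y + k * ρ)) ∧
      ∀ n, birk θ (2 * k + n) (y + k * ρ) = birk θ n y := by
  obtain ⟨h₁, h₂⟩ := θ_bounds
  have hρ : ρ = 1 - 2 * θ := rfl
  have hblock : (∀ j ≤ 2 * k, 0 ≤ birk θ j (y + k * ρ)) ∧ birk θ (2 * k) (y + k * ρ) = 0 := by
    interval_cases k
    · simp
    · have c₀ := circf_eq_one 0 (x := y + ρ)
        (by push_cast; linarith) (by push_cast; linarith)
      have c₁ := circf_eq_neg_one 0 (x := y + ρ + θ)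
        (by push_cast; linarith) (by push_cast; linarith)
      refine ⟨fun j hj => ?_, ?_⟩
      · interval_cases j <;> simp [birk, Finset.sum_range_succ, c₀, c₁]
      · simp [birk, Finset.sum_range_succ, c₀, c₁]
    · have c₀ := circf_eq_one 0 (x := y + 2 * ρ)
        (by push_cast; linarith) (by push_cast; linarith)
      have c₁ := circf_eq_neg_one 0 (x := y + 2 * ρ + θ)
        (by push_cast; linarith) (by push_cast; linarith)
      have c₂ := circf_eq_one 1 (x := y + 2 * ρ + 2 * θ)
        (by push_cast; linarith) (by push_cast; linarith)
      have c₃ := circf_eq_neg_one 1 (x := y + 2 * ρ + 3 * θ)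
        (by push_cast; linarith) (by push_cast; linarith)
      refine ⟨fun j hj => ?_, ?_⟩
      · interval_cases j <;> simp [birk, Finset.sum_range_succ, c₀, c₁, c₂, c₃]
      · simp [birk, Finset.sum_range_succ, c₀, c₁, c₂, c₃]
  refine ⟨hblock.1, fun n => ?_⟩
  rw [birk_add, hblock.2, zero_add,
    show y + k * ρ + (2 * k : ℕ) * θ = y + (k : ℤ) by push_cast; rw [hρ]; ring, birk_add_intCast]

lemma birk_digitSum_nonneg (n : ℕ) (a : ℕ → Fin 3) : 0 ≤ birk θ n (digitSum ρ a) := by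
  obtain ⟨h₁, h₂⟩ := θ_bounds
  obtain ⟨h₃, h₄⟩ := ρ_bounds
  induction n using Nat.strong_induction_on generalizing a with
  | _ n ih =>
  set u := digitSum ρ (fun i => a (i + 1))
  have hu₀ : 0 ≤ u := digitSum_nonneg (by linarith) _
  have hu : u ≤ θ := digitSum_le_θ _
  have hk : ((a 0 : ℕ) : ℝ) ≤ 2 := (a 0).natCast_val_le_sub_one.trans_eq (by norm_num)
  have hρu : ρ * u ≤ ρ * θ := by gcongr
  obtain ⟨hpre, hshift⟩ := birk_add_digit (a 0).isLt (y := ρ * u) (by positivity)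
    (by nlinarith) (by nlinarith [ρ_mul_θ])
  rw [digitSum_eq_add (by linarith) (by linarith), mul_add, mul_comm ρ, add_comm]
  rcases le_total n (2 * a 0) with hn | hn
  · exact hpre n hn
  · obtain ⟨n', rfl⟩ := Nat.exists_eq_add_of_le hn
    rw [hshift]
    exact birk_ρ_mul_nonneg hu₀ (by linarith) fun m hm => ih m (by omega) _

lemma exists_eq_ρ_mul_of_mem_heavy {z : ℝ} (hz : z ∈ heavy θ) :
    ∃ k : Fin 3, ∃ u ∈ heavy θ, z = ρ * (k + u) := by
  obtain ⟨h₁, h₂⟩ := θ_bounds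
  obtain ⟨h₃, h₄⟩ := ρ_bounds
  obtain ⟨⟨hz₀, hz₁⟩, hbirk⟩ := hz
  have hhalf : z ≤ 1 / 2 := by
    have := hbirk 1 le_rfl
    rw [birk_one, circf_of_mem_Ico hz₀ hz₁] at this
    split_ifs at this with h
    · exact h
    · linarith
  have hρ : 0 < ρ := by linarith
  set k := ⌊z / ρ⌋₊
  have hk : k < 3 := (Nat.floor_lt (by positivity)).2 (by rw [div_lt_iff₀ hρ]; push_cast; linarith)
  have hk₁ : (k : ℝ) * ρ ≤ z := (le_div_iff₀ hρ).1 (Nat.floor_le (by positivity))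
  have hk₂ : z < (k + 1) * ρ := (div_lt_iff₀ hρ).1 (Nat.lt_floor_add_one _)
  obtain ⟨-, hshift⟩ := birk_add_digit hk (y := z - k * ρ) (by linarith) (by linarith)
    (by linarith)
  have hy : z - k * ρ ∈ heavy θ := by
    refine ⟨⟨by linarith, by linarith⟩, fun n hn => ?_⟩
    rw [← hshift, sub_add_cancel]
    exact hbirk _ (by omega)
  refine ⟨⟨k, hk⟩, (z - k * ρ) / ρ, mem_heavy_of_ρ_mul_mem (by bound) ?_ ?_, ?_⟩
  · rw [div_lt_one hρ]; linarith
  · rwa [mul_div_cancel₀ _ hρ.ne']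
  · field_simp
    ring

theorem heavy_θ_eq_range_digitSum : heavy θ = range (digitSum ρ : (ℕ → Fin 3) → ℝ) := by
  obtain ⟨h₁, h₂⟩ := θ_bounds
  obtain ⟨h₃, h₄⟩ := ρ_bounds
  refine (subset_range_digitSum (by linarith) (by linarith)
    (Metric.isBounded_Ico 0 1 |>.subset fun z hz => hz.1)
    fun z hz => exists_eq_ρ_mul_of_mem_heavy hz).antisymm ?_
  rintro _ ⟨a, rfl⟩
  exact ⟨⟨digitSum_nonneg (by linarith) a, (digitSum_le_θ a).trans_lt (by linarith)⟩,
    fun n _ => birk_digitSum_nonneg n a⟩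

end SilverRotation

open SilverRotation

/-- For `θ = √2 - 1 = [2,2,2,…]`, the heavy set has Hausdorff dimension
`log 3 / log(3 + 2√2)`, a value strictly between `0` and `1`. -/
theorem stmt18 :
    dimH (heavy (Real.sqrt 2 - 1)) =
      ENNReal.ofReal (Real.log 3 / Real.log (3 + 2 * Real.sqrt 2)) ∧
      0 < Real.log 3 / Real.log (3 + 2 * Real.sqrt 2) ∧
      Real.log 3 / Real.log (3 + 2 * Real.sqrt 2) < 1 := by
  have hdim : similarityDim 3 ρ = Real.log 3 / Real.log (3 + 2 * √2) := by
    rw [similarityDim, inv_ρ, Nat.cast_ofNat]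
  obtain ⟨hρ₀, hρ₁⟩ := ρ_bounds
  have hlog : 0 < Real.log (3 + 2 * √2) := by
    rw [← inv_ρ]
    exact log_inv_pos (by linarith) (by linarith)
  refine ⟨?_, div_pos (Real.log_pos (by norm_num)) hlog, ?_⟩
  · rw [← hdim, ← dimH_range_digitSum (by norm_num) (by linarith) (by push_cast; linarith)]
    exact congrArg dimH heavy_θ_eq_range_digitSum
  · rw [div_lt_one hlog]
    exact Real.log_lt_log (by norm_num) (by linarith [Real.sqrt_pos.2 two_pos])
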